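/- For the sequences of Proposition fg1 (f(1)=0, g(n) = f(n - f(n)) + 1, f(n) = g(n - g(n-1))): for all n ≥ 1, g(n) - f(n) ∈ {0, 1}, and moreover f(n) ≤ n - 1 and g(n) ≤ n for all n ≥ 1. -/
import Mathlib

/-- `n` lies in the f-block of index `i`. -/
def fB (i n : ℕ) : Prop := i * i + 1 ≤ n ∧ n ≤ (i + 1) * (i + 1)

/-- `n` lies in the g-block of index `j`. -/
def gB (j n : ℕ) : Prop := j * j + 1 ≤ n + j ∧ n ≤ j * j + j

lemma le_sq (i : ℕ) : i ≤ i * i := by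
  cases i with
  | zero => simp
  | succ p => nlinarith

lemma fB_unique {i i' n : ℕ} (h : fB i n) (h' : fB i' n) : i = i' := by
  obtain ⟨h1, h2⟩ := h; obtain ⟨h3, h4⟩ := h'
  rcases lt_trichotomy i i' with hlt | heq | hlt
  · exfalso; nlinarith
  · exact heq
  · exfalso; nlinarith

lemma gB_unique {j j' n : ℕ} (h : gB j n) (h' : gB j' n) : j = j' := by
  obtain ⟨h1, h2⟩ := h; obtain ⟨h3, h4⟩ := h'
  rcases lt_trichotomy j j' with hlt | heq | hlt
  · exfalso; nlinarith
  · exact heq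
  · exfalso; nlinarith

lemma key (f g : ℕ → ℕ)
    (hf1 : f 1 = 0)
    (hg : ∀ n, 1 ≤ n → g n = f (n - f n) + 1)
    (hf : ∀ n, 2 ≤ n → f n = g (n - g (n - 1))) :
    ∀ n, 1 ≤ n → fB (f n) n ∧ gB (g n) n := by
  intro n
  induction n using Nat.strong_induction_on with
  | _ n ih =>
    intro hn
    rcases Nat.lt_or_ge n 2 with hlt | hge
    · -- n = 1
      have hn1 : n = 1 := by omega
      subst hn1
      have hg1 : g 1 = 1 := by
        have := hg 1 (by omega)
        rw [hf1] at this
        simpa [hf1] using this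
      refine ⟨?_, ?_⟩
      · rw [hf1]; exact ⟨by omega, by omega⟩
      · rw [hg1]; exact ⟨by omega, by omega⟩
    · obtain ⟨m, rfl⟩ : ∃ m, n = m + 2 := ⟨n - 2, by omega⟩
      obtain ⟨i, h1, h2⟩ : ∃ i : ℕ, i * i ≤ m + 1 ∧ m + 1 < (i + 1) * (i + 1) :=
        ⟨Nat.sqrt (m + 1), by simpa [pow_two] using Nat.sqrt_le' (m + 1),
          by simpa [pow_two, Nat.succ_eq_add_one] using Nat.lt_succ_sqrt' (m + 1)⟩
      have hexp : (i + 1) * (i + 1) = i * i + 2 * i + 1 := by ring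
      have hi1 : 1 ≤ i := by
        rcases Nat.eq_zero_or_pos i with h0 | h0
        · rw [h0] at h2; omega
        · exact h0
      have hii : i ≤ m + 1 := le_trans (le_sq i) h1
      -- IH at m+1 for g
      have ihg : gB (g (m + 1)) (m + 1) := (ih (m + 1) (by omega) (by omega)).2
      obtain ⟨j, hjdef⟩ : ∃ j, g (m + 1) = j := ⟨_, rfl⟩
      rw [hjdef] at ihg
      have hj1 : 1 ≤ j := by
        rw [← hjdef, hg (m + 1) (by omega)]; omega
      obtain ⟨hg1, hg2⟩ := ihg
      -- j = i or j = i + 1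
      have hji : i ≤ j := by nlinarith
      have hji' : j ≤ i + 1 := by nlinarith
      -- f (m+2) = i
      have hfn : f (m + 2) = i := by
        rw [hf (m + 2) (by omega)]
        have heq : m + 2 - 1 = m + 1 := by omega
        rw [heq, hjdef]
        rcases (by omega : j = i ∨ j = i + 1) with hj | hj
        · subst hj
          have hm' : (m + 2 - j) + j = m + 2 := by omega
          have hb : gB j (m + 2 - j) := by
            constructor
            · omega
            · omega
          have ihm : gB (g (m + 2 - j)) (m + 2 - j) :=
            (ih (m + 2 - j) (by omega) (by omega)).2
          exact gB_unique ihm hb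
        · subst hj
          have hge' : i * i + i + 2 ≤ m + 2 := by nlinarith
          have hm' : (m + 2 - (i + 1)) + (i + 1) = m + 2 := by omega
          have hb : gB i (m + 2 - (i + 1)) := by
            constructor
            · omega
            · omega
          have ihm : gB (g (m + 2 - (i + 1))) (m + 2 - (i + 1)) :=
            (ih (m + 2 - (i + 1)) (by omega) (by omega)).2
          exact gB_unique ihm hb
      refine ⟨?_, ?_⟩
      · rw [hfn]; exact ⟨by omega, by omega⟩
      · -- g (m+2)
        have hgn : g (m + 2) = f (m + 2 - i) + 1 := by
          rw [hg (m + 2) (by omega), hfn]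
        have hk : (m + 2 - i) + i = m + 2 := by omega
        have ihk : fB (f (m + 2 - i)) (m + 2 - i) :=
          (ih (m + 2 - i) (by omega) (by omega)).1
        rcases Nat.lt_or_ge (m + 2) (i * i + i + 1) with hc | hc
        · -- case A: m + 2 ≤ i*i + i, g (m+2) = i
          obtain ⟨p, rfl⟩ : ∃ p, i = p + 1 := ⟨i - 1, by omega⟩
          have hexp2 : (p + 1) * (p + 1) = p * p + 2 * p + 1 := by ring
          have hb : fB p (m + 2 - (p + 1)) := by
            constructor
            · omega
            · omega
          have hfk : f (m + 2 - (p + 1)) = p := fB_unique ihk hb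
          rw [hgn, hfk]
          constructor
          · omega
          · omega
        · -- case B: m + 2 ≥ i*i + i + 1, g (m+2) = i + 1
          have hb : fB i (m + 2 - i) := by
            constructor
            · omega
            · omega
          have hfk : f (m + 2 - i) = i := fB_unique ihk hb
          rw [hgn, hfk]
          constructor
          · omega
          · omega

/-- For the Golomb-like system f(1)=0, g(n)=f(n-f(n))+1, f(n)=g(n-g(n-1)):
g(n) - f(n) ∈ {0,1}, f(n) ≤ n - 1 and g(n) ≤ n for all n ≥ 1. -/
theorem stmt_16 (f g : ℕ → ℕ)
    (hf1 : f 1 = 0)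
    (hg : ∀ n, 1 ≤ n → g n = f (n - f n) + 1)
    (hf : ∀ n, 2 ≤ n → f n = g (n - g (n - 1))) :
    ∀ n, 1 ≤ n → (g n = f n ∨ g n = f n + 1) ∧ f n ≤ n - 1 ∧ g n ≤ n := by
  intro n hn
  obtain ⟨⟨hf1', hf2'⟩, ⟨hg1', hg2'⟩⟩ := key f g hf1 hg hf n hn
  have hii : f n ≤ f n * f n := le_sq (f n)
  have hjj : g n ≤ g n * g n := le_sq (g n)
  refine ⟨?_, ?_, ?_⟩
  · have h1 : f n ≤ g n := by nlinarith
    have h2 : g n ≤ f n + 1 := by nlinarith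
    omega
  · omega
  · nlinarith
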